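/- Let S = {z ∈ ℂ : |z| = 1} be the unit circle, let f: S^m × ℂ^n → ℂ be continuous, let ζ ∈ S^m, and let (x_t)_{t≥1} ⊂ ℂ^n be a sequence converging to 0. Then the Cesàro averages (1/T) ∑_{t=1}^T f(ζ^t, x_t) converge as T → ∞, where ζ^t denotes the componentwise t-th power. -/

import Mathlib

/-!
Write `ζ^t` as the orbit of the point `ζ` of the compact group `(S¹)^m`. The continuous
characters `χ` of `(S¹)^m` separate points, so by Stone–Weierstrass their linear span is
uniformly dense in `C((S¹)^m, ℂ)`. Along the orbit a character is `t ↦ (χ ζ)^t` with `‖χ ζ‖ = 1`,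
whose Cesàro means converge by the geometric sum formula, and Cesàro convergence is preserved
under linear combinations and uniform limits. Hence `t ↦ f(ζ^t, 0)` is Cesàro convergent. Finally
`f(ζ^t, x_t) - f(ζ^t, 0) → 0` by uniform continuity of `f` near `(S¹)^m × {0}`, and a convergent
sequence is Cesàro convergent.
-/

open Filter Topology

lemma Finset.sum_Icc_one_eq_sum_range {M : Type*} [AddCommMonoid M] (u : ℕ → M) (T : ℕ) :
    ∑ t ∈ Icc 1 T, u t = ∑ i ∈ range T, u (i + 1) := by
  rw [range_eq_Ico, sum_Ico_add' u 0 T 1, zero_add, Finset.Ico_add_one_right_eq_Icc]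

section Cesaro

variable {𝕜 : Type*} [RCLike 𝕜]

noncomputable def cesaroMean (u : ℕ → 𝕜) (T : ℕ) : 𝕜 :=
  (T : 𝕜)⁻¹ * ∑ t ∈ Finset.Icc 1 T, u t

def CesaroConvergent (u : ℕ → 𝕜) : Prop :=
  ∃ L, Tendsto (cesaroMean u) atTop (𝓝 L)

lemma cesaroMean_add (u v : ℕ → 𝕜) (T : ℕ) :
    cesaroMean (u + v) T = cesaroMean u T + cesaroMean v T := by
  simp only [cesaroMean, Pi.add_apply, Finset.sum_add_distrib, mul_add]

lemma cesaroMean_smul (c : 𝕜) (u : ℕ → 𝕜) (T : ℕ) :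
    cesaroMean (c • u) T = c * cesaroMean u T := by
  simp only [cesaroMean, Pi.smul_apply, smul_eq_mul, ← Finset.mul_sum, mul_left_comm]

lemma norm_cesaroMean_sub_le {u v : ℕ → 𝕜} {C : ℝ} (hC : 0 ≤ C)
    (h : ∀ t, ‖u t - v t‖ ≤ C) (T : ℕ) : ‖cesaroMean u T - cesaroMean v T‖ ≤ C := by
  rcases T.eq_zero_or_pos with rfl | hT
  · simpa [cesaroMean] using hC
  have hsum : ‖∑ t ∈ Finset.Icc 1 T, (u t - v t)‖ ≤ T * C := by
    simpa using norm_sum_le_of_le (Finset.Icc 1 T) fun t _ => h t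
  rw [cesaroMean, cesaroMean, ← mul_sub, ← Finset.sum_sub_distrib, norm_mul, norm_inv,
    RCLike.norm_natCast, inv_mul_le_iff₀ (by exact_mod_cast hT)]
  exact hsum

theorem Filter.Tendsto.cesaroMean {u : ℕ → 𝕜} {l : 𝕜} (h : Tendsto u atTop (𝓝 l)) :
    Tendsto (_root_.cesaroMean u) atTop (𝓝 l) := by
  refine ((h.comp (tendsto_add_atTop_nat 1)).cesaro_smul).congr fun T => ?_
  rw [_root_.cesaroMean, RCLike.real_smul_eq_coe_mul, Finset.sum_Icc_one_eq_sum_range]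
  push_cast
  rfl

theorem CesaroConvergent.of_tendsto {u : ℕ → 𝕜} {l : 𝕜} (h : Tendsto u atTop (𝓝 l)) :
    CesaroConvergent u :=
  ⟨l, h.cesaroMean⟩

theorem CesaroConvergent.add {u v : ℕ → 𝕜} (hu : CesaroConvergent u)
    (hv : CesaroConvergent v) : CesaroConvergent (u + v) := by
  obtain ⟨L, hL⟩ := hu
  obtain ⟨M, hM⟩ := hv
  exact ⟨L + M, by simpa only [← cesaroMean_add] using hL.add hM⟩

theorem CesaroConvergent.const_smul {u : ℕ → 𝕜} (hu : CesaroConvergent u) (c : 𝕜) :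
    CesaroConvergent (c • u) := by
  obtain ⟨L, hL⟩ := hu
  exact ⟨c * L, by simpa only [← cesaroMean_smul] using hL.const_mul c⟩

theorem CesaroConvergent.of_forall_norm_sub_le {u : ℕ → 𝕜}
    (h : ∀ ε > 0, ∃ v, CesaroConvergent v ∧ ∀ t, ‖u t - v t‖ ≤ ε) : CesaroConvergent u := by
  refine cauchySeq_tendsto_of_complete (Metric.cauchySeq_iff'.2 fun ε hε => ?_)
  obtain ⟨v, ⟨L, hL⟩, huv⟩ := h (ε / 3) (by positivity)
  obtain ⟨N, hN⟩ := Metric.cauchySeq_iff'.1 hL.cauchySeq (ε / 3) (by positivity)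
  have hclose (T : ℕ) : dist (cesaroMean u T) (cesaroMean v T) ≤ ε / 3 := by
    rw [dist_eq_norm]
    exact norm_cesaroMean_sub_le (by positivity) huv T
  refine ⟨N, fun T hT => ?_⟩
  calc dist (cesaroMean u T) (cesaroMean u N)
      ≤ dist (cesaroMean u T) (cesaroMean v T) + dist (cesaroMean v T) (cesaroMean v N)
        + dist (cesaroMean v N) (cesaroMean u N) := dist_triangle4 _ _ _ _
    _ < ε := by linarith [hclose T, hclose N, dist_comm (cesaroMean v N) (cesaroMean u N), hN T hT]

lemma norm_sum_Icc_pow_le {w : 𝕜} (hw : ‖w‖ ≤ 1) (hw1 : w ≠ 1) (T : ℕ) :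
    ‖∑ t ∈ Finset.Icc 1 T, w ^ t‖ ≤ 2 / ‖w - 1‖ := by
  have hgeom : (∑ t ∈ Finset.Icc 1 T, w ^ t) * (w - 1) = w * (w ^ T - 1) := by
    simp only [Finset.sum_Icc_one_eq_sum_range, pow_succ', ← Finset.mul_sum, mul_assoc,
      geom_sum_mul]
  have hnum : ‖w * (w ^ T - 1)‖ ≤ 2 := calc
    ‖w * (w ^ T - 1)‖ ≤ 1 * (1 + 1) := by
      rw [norm_mul]
      gcongr
      exact (norm_sub_le _ _).trans (by simpa using pow_le_one₀ (norm_nonneg w) hw)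
    _ = 2 := by norm_num
  rw [le_div_iff₀ (norm_pos_iff.2 (sub_ne_zero.2 hw1)), ← norm_mul, hgeom]
  exact hnum

theorem cesaroConvergent_pow {w : 𝕜} (hw : ‖w‖ ≤ 1) : CesaroConvergent (w ^ ·) := by
  rcases eq_or_ne w 1 with rfl | hw1
  · simpa using CesaroConvergent.of_tendsto (tendsto_const_nhds (x := (1 : 𝕜)))
  refine ⟨0, squeeze_zero_norm (fun T => ?_)
    (by simpa using (tendsto_inv_atTop_nhds_zero_nat (𝕜 := ℝ)).mul_const (2 / ‖w - 1‖))⟩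
  rw [cesaroMean, norm_mul, norm_inv, RCLike.norm_natCast]
  exact mul_le_mul_of_nonneg_left (norm_sum_Icc_pow_le hw hw1 T) (by positivity)

namespace ContinuousMap

variable {X : Type*} [TopologicalSpace X]

def cesaroConvergentAlong (p : ℕ → X) : Submodule 𝕜 C(X, 𝕜) where
  carrier := {g | CesaroConvergent fun t => g (p t)}
  add_mem' hg hh := hg.add hh
  zero_mem' := CesaroConvergent.of_tendsto (l := (0 : 𝕜)) tendsto_const_nhds
  smul_mem' c _ hg := hg.const_smul c

theorem isClosed_cesaroConvergentAlong [CompactSpace X] (p : ℕ → X) :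
    IsClosed (cesaroConvergentAlong (𝕜 := 𝕜) p : Set C(X, 𝕜)) := by
  refine isClosed_of_closure_subset fun g hg => ?_
  refine CesaroConvergent.of_forall_norm_sub_le fun ε hε => ?_
  obtain ⟨h, hh, hgh⟩ := Metric.mem_closure_iff.1 hg ε hε
  exact ⟨_, hh, fun t => (dist_eq_norm (g (p t)) (h (p t))) ▸
    (dist_apply_le_dist (p t)).trans hgh.le⟩

end ContinuousMap

end Cesaro

namespace PontryaginDual

variable {X : Type*} [TopologicalSpace X] [Monoid X]

noncomputable def toContinuousMapHom : PontryaginDual X →* C(X, ℂ) where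
  toFun χ := ⟨fun x => χ x, by fun_prop⟩
  map_one' := by ext; simp
  map_mul' _ _ := rfl

@[simp]
theorem toContinuousMapHom_apply (χ : PontryaginDual X) (x : X) :
    toContinuousMapHom χ x = χ x :=
  rfl

theorem star_toContinuousMapHom (χ : PontryaginDual X) :
    star (toContinuousMapHom χ) = toContinuousMapHom χ⁻¹ := by
  ext x
  exact (Circle.coe_inv_eq_conj (χ x)).symm

theorem toContinuousMapHom_mem_cesaroConvergentAlong (χ : PontryaginDual X) (ζ : X) :
    toContinuousMapHom χ ∈ ContinuousMap.cesaroConvergentAlong (ζ ^ ·) := by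
  simpa [ContinuousMap.cesaroConvergentAlong] using cesaroConvergent_pow (χ ζ).norm_coe.le

end PontryaginDual

open PontryaginDual in
theorem cesaroConvergent_comp_pow {X : Type*} [TopologicalSpace X] [Monoid X] [CompactSpace X]
    (hsep : ∀ x y : X, x ≠ y → ∃ χ : PontryaginDual X, χ x ≠ χ y) (g : C(X, ℂ)) (ζ : X) :
    CesaroConvergent fun t => g (ζ ^ t) := by
  set A := StarAlgebra.adjoin ℂ (Set.range (toContinuousMapHom (X := X)))
  have hdense : A.topologicalClosure = ⊤ := by
    refine ContinuousMap.starSubalgebra_topologicalClosure_eq_top_of_separatesPoints A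
      fun x y hxy => ?_
    obtain ⟨χ, hχ⟩ := hsep x y hxy
    exact ⟨_, ⟨toContinuousMapHom χ, StarAlgebra.subset_adjoin _ _ ⟨χ, rfl⟩, rfl⟩,
      fun h => hχ (Circle.coe_injective h)⟩
  -- `star χ = χ⁻¹`, so the generators of `A` are closed under `star` and products
  have hgen : Set.range toContinuousMapHom ∪ star (Set.range toContinuousMapHom) ⊆
      (MonoidHom.mrange (toContinuousMapHom (X := X)) : Set C(X, ℂ)) := by
    rintro _ (⟨χ, rfl⟩ | ⟨χ, hχ⟩)
    · exact ⟨χ, rfl⟩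
    · exact ⟨χ⁻¹, by rw [← star_toContinuousMapHom, hχ, star_star]⟩
  have hA : (A : Set C(X, ℂ)) ⊆ ContinuousMap.cesaroConvergentAlong (𝕜 := ℂ) (ζ ^ ·) := by
    intro g hg
    replace hg : g ∈ Subalgebra.toSubmodule A.toSubalgebra := hg
    rw [StarAlgebra.adjoin_eq_span] at hg
    refine Submodule.span_le.2 (fun g hg => ?_) hg
    obtain ⟨χ, rfl⟩ := Submonoid.closure_le.2 hgen hg
    exact toContinuousMapHom_mem_cesaroConvergentAlong χ ζ
  have hg : g ∈ closure (A : Set C(X, ℂ)) := by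
    rw [← StarSubalgebra.topologicalClosure_coe, hdense]
    trivial
  exact closure_minimal hA (ContinuousMap.isClosed_cesaroConvergentAlong _) hg

theorem PontryaginDual.exists_apply_ne_of_ne {ι : Type*} {x y : ι → Circle} (h : x ≠ y) :
    ∃ χ : PontryaginDual (ι → Circle), χ x ≠ χ y := by
  obtain ⟨i, hi⟩ := Function.ne_iff.1 h
  exact ⟨⟨Pi.evalMonoidHom _ i, continuous_apply i⟩, hi⟩

theorem Continuous.tendsto_sub_uncurry_of_tendsto {α β ι E : Type*} [UniformSpace α]
    [WeaklyLocallyCompactSpace α] [UniformSpace β] [CompactSpace β]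
    [SeminormedAddCommGroup E] {f : α → β → E} (hf : Continuous (Function.uncurry f))
    {l : Filter ι} {a : α} {x : ι → α} (hx : Tendsto x l (𝓝 a)) (p : ι → β) :
    Tendsto (fun t => f (x t) (p t) - f a (p t)) l (𝓝 0) := by
  refine Metric.tendsto_nhds.2 fun ε hε => ?_
  filter_upwards [hx.eventually (Metric.tendstoUniformly_iff.1 (hf.tendstoUniformly f a) ε hε)]
    with t ht
  rw [dist_zero_right, ← dist_eq_norm, dist_comm]
  exact ht (p t)

/-- Cesàro averages of `f(ζ^t, x_t)` converge for continuous `f`, `ζ` on the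
torus, and `x_t → 0`. -/
theorem stmt_5 (m n : ℕ) (f : (Fin m → ℂ) × (Fin n → ℂ) → ℂ)
    (hf : Continuous f)
    (ζ : Fin m → ℂ) (hζ : ∀ i, ‖ζ i‖ = 1)
    (x : ℕ → (Fin n → ℂ)) (hx : Tendsto x atTop (nhds 0)) :
    ∃ L : ℂ, Tendsto
      (fun T : ℕ => (T : ℂ)⁻¹ * ∑ t ∈ Finset.Icc 1 T, f (fun i => (ζ i) ^ t, x t))
      atTop (nhds L) := by
  let ζ' : Fin m → Circle := fun i => ⟨ζ i, mem_sphere_zero_iff_norm.2 (hζ i)⟩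
  let g : (Fin n → ℂ) → (Fin m → Circle) → ℂ := fun y z => f (fun i => z i, y)
  have hg : Continuous (Function.uncurry g) := by fun_prop
  have hmain : CesaroConvergent fun t => g 0 (ζ' ^ t) :=
    cesaroConvergent_comp_pow (fun _ _ => PontryaginDual.exists_apply_ne_of_ne)
      ⟨g 0, by fun_prop⟩ ζ'
  have herr := CesaroConvergent.of_tendsto (hg.tendsto_sub_uncurry_of_tendsto hx (ζ' ^ ·))
  have hsplit : (fun t => g 0 (ζ' ^ t)) + (fun t => g (x t) (ζ' ^ t) - g 0 (ζ' ^ t)) =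
      fun t => f (fun i => ζ i ^ t, x t) := by
    ext t
    rw [Pi.add_apply, add_sub_cancel]
    rfl
  obtain ⟨L, hL⟩ := hsplit ▸ hmain.add herr
  exact ⟨L, hL⟩
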